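/- arXiv:1802.08899 — 6 statements merged into one kernel-verified Lean document; each statement's English description precedes it below -/
import Mathlib

section
/- Every unit quaternion q can be written as q = a b a⁻¹ b⁻¹ for some nonzero quaternions a and b. -/
/-!
If `b ≠ 0` satisfies `b * star a = a * b` (for purely imaginary `b` this says that `b` is
orthogonal to the imaginary part of `a`), then `b a⁻¹ b⁻¹ = a / |a|²`, so the commutator
`a b a⁻¹ b⁻¹` is `a² / |a|²`. Such a `b` exists for every `a`. Every unit quaternion `q` is of the
form `a² / |a|²`: since `q² = 2 (Re q) q - 1`, the choice `a = 1 + q` gives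
`a² = 2 (1 + Re q) q = |a|² q`, and when `q = -1` one takes `a = i`.
-/

open Quaternion

namespace Quaternion

variable {R : Type*}

section CommRing

variable [CommRing R]

theorem mk_zero_mul_star_mk {r x y z u v w : R} (h : x * u + y * v + z * w = 0) :
    (⟨0, u, v, w⟩ : ℍ[R]) * star (⟨r, x, y, z⟩ : ℍ[R]) = ⟨r, x, y, z⟩ * ⟨0, u, v, w⟩ := by
  simp only [QuaternionAlgebra.star_mk, QuaternionAlgebra.mk_mul_mk, QuaternionAlgebra.mk.injEq]
  exact ⟨by linear_combination 2 * h, by ring, by ring, by ring⟩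

theorem exists_ne_zero_mul_star_eq_mul [Nontrivial R] (a : ℍ[R]) :
    ∃ b ≠ 0, b * star a = a * b := by
  obtain ⟨r, x, y, z⟩ := a
  by_cases hxy : x = 0 ∧ y = 0
  · obtain ⟨rfl, rfl⟩ := hxy
    exact ⟨⟨0, 1, 0, 0⟩, fun h ↦ one_ne_zero congr(($h).imI), mk_zero_mul_star_mk (by ring)⟩
  · exact ⟨⟨0, -y, x, 0⟩, fun h ↦ hxy ⟨congr(($h).imJ), neg_eq_zero.mp congr(($h).imI)⟩,
      mk_zero_mul_star_mk (by ring)⟩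

theorem one_add_mul_one_add_eq_normSq_smul {q : ℍ[R]} (hq : normSq q = 1) :
    (1 + q) * (1 + q) = normSq (1 + q) • q := by
  rw [normSq_def'] at hq
  ext <;> simp only [re_mul, imI_mul, imJ_mul, imK_mul, re_add, imI_add, imJ_add, imK_add, re_one,
    imI_one, imJ_one, imK_one, zero_add, normSq_def', re_smul, imI_smul, imJ_smul, imK_smul,
    smul_eq_mul]
  · linear_combination (-1 - q.re) * hq
  · linear_combination -q.imI * hq
  · linear_combination -q.imJ * hq
  · linear_combination -q.imK * hq

end CommRing

theorem exists_ne_zero_mul_self_eq_normSq_smul [CommRing R] [LinearOrder R] [IsStrictOrderedRing R]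
    {q : ℍ[R]} (hq : normSq q = 1) : ∃ a : ℍ[R], a ≠ 0 ∧ a * a = normSq a • q := by
  by_cases hq' : q = -1
  · subst hq'
    let i : ℍ[R] := ⟨0, 1, 0, 0⟩
    have hi : normSq i = 1 := by rw [normSq_def']; simp [i]
    have hii : i * i = -1 := by rw [← sq, sq_eq_neg_normSq.mpr rfl, hi, coe_one]
    exact ⟨i, fun h ↦ one_ne_zero congr(($h).imI), by rw [hii, hi, one_smul]⟩
  · exact ⟨1 + q, fun h ↦ hq' (eq_neg_of_add_eq_zero_right h),
      one_add_mul_one_add_eq_normSq_smul hq⟩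

theorem mul_mul_inv_mul_inv_eq_inv_normSq_smul [Field R] [LinearOrder R] [IsStrictOrderedRing R]
    {a b : ℍ[R]} (hb : b ≠ 0) (h : b * star a = a * b) :
    a * b * a⁻¹ * b⁻¹ = (normSq a)⁻¹ • (a * a) := by
  rw [inv_def, mul_smul_comm, smul_mul_assoc, mul_assoc a, h, ← mul_assoc, mul_assoc,
    mul_inv_cancel₀ hb, mul_one]

end Quaternion

/-- Every unit quaternion is a commutator `a b a⁻¹ b⁻¹` of nonzero quaternions. -/
theorem stmt_4 (q : ℍ[ℝ]) (hq : ‖q‖ = 1) :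
    ∃ a b : ℍ[ℝ], a ≠ 0 ∧ b ≠ 0 ∧ q = a * b * a⁻¹ * b⁻¹ := by
  have hq₁ : normSq q = 1 := by rw [normSq_eq_norm_mul_self, hq, mul_one]
  obtain ⟨a, ha, hsq⟩ := exists_ne_zero_mul_self_eq_normSq_smul hq₁
  obtain ⟨b, hb, hab⟩ := exists_ne_zero_mul_star_eq_mul a
  refine ⟨a, b, ha, hb, ?_⟩
  rw [mul_mul_inv_mul_inv_eq_inv_normSq_smul hb hab, hsq, inv_smul_smul₀ (normSq_ne_zero.mpr ha)]
end

section
/- For 0 < θ < π, the map u ↦ cos(θ) + sin(θ)u is a quandle isomorphism from the spherical quandle S²_ψ with ψ = 2π - 2θ (operation: u * v = rotation of u about v by ψ) to the conjugacy class C̃_θ = { cos(θ) + sin(θ)v : v ∈ S² } in the unit quaternions, equipped with the conjugation quandle operation p * q = q⁻¹ p q. -/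
/-!
Write `q = e^{θv} = cos θ + sin θ · v`. Since `v² = -1`, `q` has norm one, so `q⁻¹ = q̄` and
`u ↦ q⁻¹ u q` is the Rodrigues rotation about `v` by `-2θ ≡ 2π - 2θ`. Conjugation fixes the reals
and is `ℝ`-linear, hence commutes with `u ↦ e^{θu}`; this is the intertwining identity.
Injectivity of `u ↦ e^{θu}` comes from `sin θ ≠ 0` for `0 < θ < π`.
-/

open Quaternion
noncomputable section

/-- A pure unit quaternion: zero real part and norm 1 (identified with a point of `S²`). -/
def IsPureUnit (u : ℍ[ℝ]) : Prop := u.re = 0 ∧ ‖u‖ = 1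

/-- `e^{θu} = cos θ + sin θ · u` for a pure unit quaternion `u`. -/
def expQ (θ : ℝ) (u : ℍ[ℝ]) : ℍ[ℝ] := ((Real.cos θ : ℝ) : ℍ[ℝ]) + Real.sin θ • u

/-- Rodrigues formula: rotation of the pure quaternion `u` about the axis `v` (a pure unit
quaternion) by angle `ψ` (right-hand rule), expressed inside the quaternions, where the
cross product is `(v*u - u*v)/2` and the inner product is `-(v*u).re`. -/
def rot (ψ : ℝ) (v u : ℍ[ℝ]) : ℍ[ℝ] :=
  Real.cos ψ • u + Real.sin ψ • ((v * u - u * v) / 2)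
    + ((1 - Real.cos ψ) * (-(v * u).re)) • v

lemma Quaternion.div_two_eq_smul (x : ℍ[ℝ]) : x / 2 = (2⁻¹ : ℝ) • x := by
  rw [← mul_coe_eq_smul, coe_inv, div_eq_mul_inv]
  rfl

namespace IsPureUnit

variable {v : ℍ[ℝ]}

lemma normSq_eq_one (hv : IsPureUnit v) : normSq v = 1 := by
  rw [normSq_eq_norm_mul_self, hv.2, mul_one]

lemma imI_sq_add_imJ_sq_add_imK_sq (hv : IsPureUnit v) : v.imI ^ 2 + v.imJ ^ 2 + v.imK ^ 2 = 1 := by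
  have h := hv.normSq_eq_one
  rwa [normSq_def', hv.1, sq, zero_mul, zero_add] at h

lemma normSq_expQ (hv : IsPureUnit v) (θ : ℝ) : normSq (expQ θ v) = 1 := by
  rw [expQ, normSq_add, normSq_coe, normSq_smul, hv.normSq_eq_one, coe_mul_eq_smul, re_smul,
    re_star, re_smul, hv.1]
  simp only [smul_zero, mul_zero, add_zero, mul_one]
  exact Real.cos_sq_add_sin_sq θ

lemma inv_expQ (hv : IsPureUnit v) (θ : ℝ) : (expQ θ v)⁻¹ = star (expQ θ v) := by
  refine inv_eq_of_mul_eq_one_right ?_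
  rw [self_mul_star, hv.normSq_expQ, coe_one]

lemma inv_expQ_mul_mul_expQ (hv : IsPureUnit v) (θ : ℝ) {u : ℍ[ℝ]} (hu : u.re = 0) :
    (expQ θ v)⁻¹ * u * expQ θ v = rot (-(2 * θ)) v u := by
  have hv2 := hv.imI_sq_add_imJ_sq_add_imK_sq
  have hcs := Real.sin_sq_add_cos_sq θ
  have hcos : Real.cos (-(2 * θ)) = Real.cos θ ^ 2 - Real.sin θ ^ 2 := by
    rw [Real.cos_neg, Real.cos_two_mul]; linear_combination hcs
  have hsin : Real.sin (-(2 * θ)) = -(2 * Real.sin θ * Real.cos θ) := by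
    rw [Real.sin_neg, Real.sin_two_mul]
  -- With `c = cos θ`, `s = sin θ`, the two sides differ by
  -- `s²(1 - ‖v‖²) u + (s² + c² - 1) ⟨u, v⟩ v`.
  set dot := u.imI * v.imI + u.imJ * v.imJ + u.imK * v.imK
  rw [hv.inv_expQ, rot, hcos, hsin, div_two_eq_smul]
  ext <;> simp only [expQ, star_add, star_coe, Quaternion.star_smul, re_add, re_sub, re_mul,
    re_coe, re_smul, re_star, imI_add, imI_sub, imI_mul, imI_coe, imI_smul, imI_star, imJ_add,
    imJ_sub, imJ_mul, imJ_coe, imJ_smul, imJ_star, imK_add, imK_sub, imK_mul, imK_coe, imK_smul,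
    imK_star, smul_eq_mul, hv.1, hu]
  · ring
  · linear_combination (-(Real.sin θ ^ 2 * u.imI)) * hv2 + (dot * v.imI) * hcs
  · linear_combination (-(Real.sin θ ^ 2 * u.imJ)) * hv2 + (dot * v.imJ) * hcs
  · linear_combination (-(Real.sin θ ^ 2 * u.imK)) * hv2 + (dot * v.imK) * hcs

end IsPureUnit

lemma expQ_conj (θ : ℝ) {r : ℍ[ℝ]} (hr : r ≠ 0) (u : ℍ[ℝ]) :
    expQ θ (r⁻¹ * u * r) = r⁻¹ * expQ θ u * r := by
  rw [expQ, expQ, mul_add, add_mul, ← coe_commutes, inv_mul_cancel_right₀ hr, mul_smul_comm,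
    smul_mul_assoc]

lemma rot_add_two_pi (ψ : ℝ) (v u : ℍ[ℝ]) : rot (ψ + 2 * Real.pi) v u = rot ψ v u := by
  simp only [rot, Real.cos_add_two_pi, Real.sin_add_two_pi]

lemma expQ_injective {θ : ℝ} (hθ : Real.sin θ ≠ 0) : Function.Injective (expQ θ) :=
  fun _ _ h => smul_right_injective ℍ[ℝ] hθ (add_left_cancel h)

/-- For `0 < θ < π`, `u ↦ cos θ + sin θ · u` is a quandle isomorphism from `S²_ψ`,
`ψ = 2π - 2θ`, to the conjugacy class `C̃_θ` with conjugation operation `p * q = q⁻¹ p q`: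
it intertwines the operations and is a bijection onto `C̃_θ`. -/
theorem stmt_8 (θ : ℝ) (h1 : 0 < θ) (h2 : θ < Real.pi) :
    (∀ u v : ℍ[ℝ], IsPureUnit u → IsPureUnit v →
      expQ θ (rot (2 * Real.pi - 2 * θ) v u) = (expQ θ v)⁻¹ * expQ θ u * expQ θ v) ∧
    Set.BijOn (fun u => expQ θ u) {u | IsPureUnit u}
      {q : ℍ[ℝ] | ∃ v : ℍ[ℝ], IsPureUnit v ∧ q = expQ θ v} := by
  refine ⟨fun u v hu hv => ?_, ?_⟩
  · have hq : expQ θ v ≠ 0 := fun h => by simpa [h] using hv.normSq_expQ θ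
    rw [show 2 * Real.pi - 2 * θ = -(2 * θ) + 2 * Real.pi by ring, rot_add_two_pi,
      ← hv.inv_expQ_mul_mul_expQ θ hu.1, expQ_conj θ hq]
  · have hinj := expQ_injective (Real.sin_pos_of_pos_of_lt_pi h1 h2).ne'
    exact ⟨fun u hu => ⟨u, hu, rfl⟩, hinj.injOn, fun q ⟨v, hv, hq⟩ => ⟨v, hv, hq.symm⟩⟩
end
end

section
/- Let G be a group and x ∈ G. Define the quandle operation on G by a * b = f_x(a b⁻¹) b where f_x(g) = x⁻¹ g x. The map (a,g) ↦ g is a quandle isomorphism from Eis(G,x) = {(a,g) ∈ x^G × G' : a = g⁻¹ x g} with operation (a,g)*(b,h) = (b⁻¹ a b, x⁻¹ g b) to the generalized Alexander quandle GAlex(G', f_x). -/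
/-- The underlying set of the Eisermann quandle `Eis(G,x)`:
pairs `(a,g)` with `g` in the commutator subgroup and `a = g⁻¹ x g`
(so `a` lies in the conjugacy class `x^G`). -/
def EisCarrier (G : Type*) [Group G] (x : G) : Type _ :=
  {p : G × G // p.2 ∈ commutator G ∧ p.1 = p.2⁻¹ * x * p.2}

/-- The Eisermann quandle operation `(a,g)*(b,h) = (b⁻¹ a b, x⁻¹ g b)`. -/
def eisMul {G : Type*} [Group G] (x : G) (p q : G × G) : G × G :=
  (q.1⁻¹ * p.1 * q.1, x⁻¹ * p.2 * q.1)

/-- The generalized Alexander quandle operation `u * v = f_x(u v⁻¹) v` on `G`,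
with `f_x(g) = x⁻¹ g x`. -/
def galexMul {G : Type*} [Group G] (x : G) (u v : G) : G :=
  x⁻¹ * (u * v⁻¹) * x * v

/-!
Since `a` is determined by `g` through `a = g⁻¹ x g`, the projection `(a,g) ↦ g` is a bijection
onto `G'`. Substituting `b = h⁻¹ x h` gives `x⁻¹ g b = x⁻¹ (g h⁻¹) x h = f_x(g h⁻¹) h`, which
is the Alexander operation; it stays in `G'` because it equals `f_x(g) ⁅x⁻¹, h⁻¹⁆`.
-/

section

open scoped commutatorElement

variable {G : Type*} [Group G] (x : G)

theorem galexMul_eq_mul_commutatorElement (u v : G) :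
    galexMul x u v = x⁻¹ * u * x * ⁅x⁻¹, v⁻¹⁆ := by
  simp only [galexMul, commutatorElement_def]
  group

theorem galexMul_mem_commutator {u : G} (hu : u ∈ commutator G) (v : G) :
    galexMul x u v ∈ commutator G := by
  rw [galexMul_eq_mul_commutatorElement, commutator_def]
  refine mul_mem ?_ (Subgroup.commutator_mem_commutator (Subgroup.mem_top _) (Subgroup.mem_top _))
  exact (Subgroup.commutator_normal ⊤ ⊤).conj_mem' u (commutator_def G ▸ hu) x

theorem eisMul_snd_eq_galexMul {p q : G × G} (hq : q.1 = q.2⁻¹ * x * q.2) :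
    (eisMul x p q).2 = galexMul x p.2 q.2 := by
  simp only [eisMul, galexMul, hq]
  group

theorem eisMul_fst_eq_conj_snd {p : G × G} (hp : p.1 = p.2⁻¹ * x * p.2) (q : G × G) :
    (eisMul x p q).1 = (eisMul x p q).2⁻¹ * x * (eisMul x p q).2 := by
  simp only [eisMul, hp]
  group

def EisCarrier.equivCommutator : EisCarrier G x ≃ commutator G where
  toFun p := ⟨p.val.2, p.prop.1⟩
  invFun g := ⟨(g.val⁻¹ * x * g.val, g.val), g.prop, rfl⟩
  left_inv p := Subtype.ext (Prod.ext p.prop.2.symm rfl)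
  right_inv _ := rfl

end

/-- The map `(a,g) ↦ g` is a quandle isomorphism from `Eis(G,x)` to `GAlex(G', f_x)`:
the Eisermann operation is closed on the carrier, the projection is a bijection onto the
commutator subgroup, and it intertwines the Eisermann operation with the generalized
Alexander operation. -/
theorem stmt_9 {G : Type*} [Group G] (x : G) :
    (∀ p q : EisCarrier G x,
      (eisMul x p.val q.val).2 ∈ commutator G ∧
      (eisMul x p.val q.val).1
        = (eisMul x p.val q.val).2⁻¹ * x * (eisMul x p.val q.val).2) ∧
    Function.Bijective
      (fun p : EisCarrier G x => (⟨p.val.2, p.prop.1⟩ : commutator G)) ∧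
    (∀ p q : EisCarrier G x,
      (eisMul x p.val q.val).2 = galexMul x p.val.2 q.val.2) := by
  refine ⟨fun p q => ⟨?_, eisMul_fst_eq_conj_snd x p.prop.2 q.val⟩,
    (EisCarrier.equivCommutator x).bijective, fun p q => eisMul_snd_eq_galexMul x q.prop.2⟩
  rw [eisMul_snd_eq_galexMul x q.prop.2]
  exact galexMul_mem_commutator x p.prop.1 _
end

section
/- Let G be a group, n = 2k+1 odd, and let q_0, q_1, ..., q_{n-1} ∈ G satisfy q_{i+1} = q_i⁻¹ q_{i-1} q_i for i = 1,...,n-1 (indices mod n, with q_n = q_0). Set q = q_0 q_1. Then q_0^n · (q_1 q_3 ⋯ q_{2k-1}) · (q_0 q_2 ⋯ q_{2k}) = q^n. -/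
/-- For `n = 2k+1` and `q_0,…,q_{n-1}` in a group `G` satisfying the torus-knot coloring
relations `q_{i+1} = q_i⁻¹ q_{i-1} q_i` (for `i = 1,…,n-1`, with `q_n = q_0`), and
`q = q_0 q_1`, one has `q_0^n (q_1 q_3 ⋯ q_{2k-1})(q_0 q_2 ⋯ q_{2k}) = q^n`. -/
theorem stmt_11 {G : Type*} [Group G] (k : ℕ) (hk : 1 ≤ k) (q : ℕ → G)
    (hrel : ∀ i : ℕ, 1 ≤ i → i ≤ 2 * k → q (i + 1) = (q i)⁻¹ * q (i - 1) * q i)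
    (hcyc : q (2 * k + 1) = q 0) :
    (q 0) ^ (2 * k + 1)
        * ((List.range k).map (fun i => q (2 * i + 1))).prod
        * ((List.range (k + 1)).map (fun i => q (2 * i))).prod
      = (q 0 * q 1) ^ (2 * k + 1) := by
  set Q := q 0 * q 1 with hQ
  -- the chain q_i q_{i+1} = Q
  have hchain : ∀ i, i ≤ 2 * k → q i * q (i + 1) = Q := by
    intro i hi
    induction i with
    | zero => rfl
    | succ j ih =>
      have hj : j ≤ 2 * k := by omega
      have hr := hrel (j + 1) (by omega) hi
      simp only [Nat.add_sub_cancel] at hr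
      rw [hr, ← ih hj]
      group
  have hnext : ∀ i, i ≤ 2 * k → q (i + 1) = (q i)⁻¹ * Q := by
    intro i hi
    rw [← hchain i hi]; group
  have heven : ∀ i, i ≤ k → q (2 * i) = (Q⁻¹) ^ i * q 0 * Q ^ i := by
    intro i
    induction i with
    | zero => simp
    | succ j ih =>
      intro hj
      have e1 := hnext (2 * j) (by omega)
      have e2 := hnext (2 * j + 1) (by omega)
      have h2 : 2 * (j + 1) = 2 * j + 1 + 1 := by ring
      rw [h2, e2, e1, ih (by omega)]
      group
  -- telescoped products
  have hA : ∀ m, m ≤ k →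
      ((List.range m).map (fun i => q (2 * i + 1))).prod = ((q 0)⁻¹) ^ m * Q ^ m := by
    intro m
    induction m with
    | zero => simp
    | succ j ih =>
      intro hj
      rw [List.range_succ, List.map_append, List.prod_append, ih (by omega)]
      simp only [List.map_cons, List.map_nil, List.prod_cons, List.prod_nil, mul_one]
      rw [hnext (2 * j) (by omega), heven j (by omega)]
      group
  have hB : ∀ m, m ≤ k + 1 →
      ((List.range m).map (fun i => q (2 * i))).prod = (q 0 * Q⁻¹) ^ m * Q ^ m := by
    intro m
    induction m with
    | zero => simp
    | succ j ih =>
      intro hj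
      rw [List.range_succ, List.map_append, List.prod_append, ih (by omega)]
      simp only [List.map_cons, List.map_nil, List.prod_cons, List.prod_nil, mul_one]
      rw [heven j (by omega), pow_succ (q 0 * Q⁻¹), pow_succ Q]
      group
  -- cyclicity: q (2k) = q0 q1 q0⁻¹
  have h2k : q (2 * k) = q 0 * q 1 * (q 0)⁻¹ := by
    have := hchain (2 * k) le_rfl
    rw [hcyc] at this
    rw [← hQ, ← this]
    group
  have hconj : q 0 * Q ^ k = Q ^ k * (q 0 * q 1 * (q 0)⁻¹) := by
    have h := (heven k le_rfl).symm.trans h2k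
    rw [← h]
    group
  have hcomm : ∀ m : ℕ, (q 0) ^ m * Q ^ k = Q ^ k * (q 0 * q 1 * (q 0)⁻¹) ^ m := by
    intro m
    induction m with
    | zero => simp
    | succ j ih =>
      rw [pow_succ' (q 0), mul_assoc, ih, ← mul_assoc, hconj, pow_succ',
        mul_assoc, mul_assoc]
  rw [hA k le_rfl, hB (k + 1) le_rfl]
  have hc : q 0 * Q⁻¹ = (q 0 * q 1 * (q 0)⁻¹)⁻¹ := by rw [hQ]; group
  rw [hc]
  have e1 : (q 0) ^ (2 * k + 1) * ((q 0)⁻¹) ^ k = (q 0) ^ (k + 1) := by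
    rw [inv_pow, show 2 * k + 1 = (k + 1) + k from by ring, pow_add, mul_inv_cancel_right]
  simp only [← mul_assoc]
  rw [e1, hcomm (k + 1), inv_pow, mul_inv_cancel_right, ← pow_add]
  congr 1
  omega
end

section
/- Let G be a group, n = 2k+1 odd, and q_0, ..., q_{n-1} ∈ G with q_i q_{i+1} = q_{i+1} q_{i+2} for all i (indices mod n). Set q = q_0 q_1. Then q⁻¹ q_i q = q_{i+2} for all i (indices mod n), and consequently q^n commutes with every q_i. -/
/-- If `q_0,…,q_{n-1}` (indices mod `n = 2k+1`) in a group satisfy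
`q_i q_{i+1} = q_{i+1} q_{i+2}` for all `i`, then with `q = q_0 q_1` one has
`q⁻¹ q_i q = q_{i+2}` for all `i`, and consequently `q^n` commutes with every `q_i`. -/
theorem stmt_12 {G : Type*} [Group G] (k : ℕ) (q : ZMod (2 * k + 1) → G)
    (hrel : ∀ i : ZMod (2 * k + 1), q i * q (i + 1) = q (i + 1) * q (i + 2)) :
    ∀ i : ZMod (2 * k + 1),
      (q 0 * q 1)⁻¹ * q i * (q 0 * q 1) = q (i + 2) ∧
      Commute ((q 0 * q 1) ^ (2 * k + 1)) (q i) := by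
  set Q := q 0 * q 1 with hQ
  -- the product of consecutive elements is constant
  have hconstN : ∀ m : ℕ, q (m : ZMod (2 * k + 1)) * q ((m : ZMod (2 * k + 1)) + 1) = Q := by
    intro m
    induction m with
    | zero => simp [hQ]
    | succ m ih =>
      have := (hrel (m : ZMod (2 * k + 1))).symm
      push_cast
      rw [show ((m : ZMod (2 * k + 1)) + 1) + 1 = (m : ZMod (2 * k + 1)) + 2 by ring]
      rw [this]
      exact ih
  have hconst : ∀ i : ZMod (2 * k + 1), q i * q (i + 1) = Q := by
    intro i
    simpa [ZMod.natCast_val, ZMod.cast_id] using hconstN i.val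
  -- conjugation shifts the index by 2
  have hconj : ∀ i : ZMod (2 * k + 1), Q⁻¹ * q i * Q = q (i + 2) := by
    intro i
    have h1 := hconst i
    have h2 := hconst (i + 1)
    rw [show (i + 1) + 1 = i + 2 by ring] at h2
    calc Q⁻¹ * q i * Q = Q⁻¹ * (q i * q (i + 1)) * (q (i + 1))⁻¹ * Q := by group
      _ = (q (i + 1))⁻¹ * Q := by rw [h1]; group
      _ = (q (i + 1))⁻¹ * (q (i + 1) * q (i + 2)) := by rw [h2]
      _ = q (i + 2) := by group
  -- iterate conjugation
  have hpow : ∀ (m : ℕ) (i : ZMod (2 * k + 1)),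
      (Q ^ m)⁻¹ * q i * Q ^ m = q (i + 2 * m) := by
    intro m
    induction m with
    | zero => intro i; simp
    | succ m ih =>
      intro i
      have : (Q ^ (m + 1))⁻¹ * q i * Q ^ (m + 1)
          = Q⁻¹ * ((Q ^ m)⁻¹ * q i * Q ^ m) * Q := by
        rw [pow_succ]; group
      rw [this, ih, hconj]
      congr 1
      push_cast
      ring
  intro i
  refine ⟨hconj i, ?_⟩
  have h := hpow (2 * k + 1) i
  have hz : ((2 * (2 * k + 1) : ℕ) : ZMod (2 * k + 1)) = 0 := by
    simp [ZMod.natCast_self]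
  rw [show (i + 2 * ((2 * k + 1 : ℕ) : ZMod (2 * k + 1))) = i + ((2 * (2 * k + 1) : ℕ) : ZMod (2 * k + 1)) by push_cast; ring, hz, add_zero] at h
  have h2 := congrArg (fun x => Q ^ (2 * k + 1) * x) h
  simp only [← mul_assoc, mul_inv_cancel, one_mul] at h2
  exact h2.symm
end

section
/- Let n = 2k+1 be odd and let q_0, ..., q_{n-1} be unit quaternions satisfying q_{i+1} = q_i⁻¹ q_{i-1} q_i for all i (indices mod n), such that not all q_i commute pairwise (i.e., there exist i, j with q_i q_j ≠ q_j q_i). Then (q_0 q_1)^n ∈ {1, -1}. -/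
/-!
The relation says `q i * q (i + 1) = q (i - 1) * q i`, so all consecutive products equal
`p = q 0 * q 1`, and then `p * q (i + 2) = q i * p`: conjugation by `p` shifts indices by two.
As `2 * n = 0` in `ZMod n`, `p ^ n` commutes with every `q i`. In `ℍ[ℝ]` two quaternions
commute exactly when their imaginary parts are parallel, so an element commuting with two
noncommuting quaternions is real; being of norm one, it is `±1`.
-/

open Quaternion Matrix

theorem cross_eq_zero_of_cross_eq_zero_of_ne_zero {F : Type*} [Field F] {w a b : Fin 3 → F}
    (hw : w ≠ 0) (ha : w ⨯₃ a = 0) (hb : w ⨯₃ b = 0) : a ⨯₃ b = 0 := by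
  have smul_of_cross_eq_zero {v : Fin 3 → F} (hv : w ⨯₃ v = 0) : ∃ c : F, c • w = v := by
    by_contra! h
    exact crossProduct_ne_zero_iff_linearIndependent.mpr
      ((LinearIndependent.pair_iff' hw).mpr h) hv
  obtain ⟨c, rfl⟩ := smul_of_cross_eq_zero ha
  obtain ⟨d, rfl⟩ := smul_of_cross_eq_zero hb
  simp [cross_self]

namespace Quaternion

variable {R : Type*} [Field R]

def imVec (x : ℍ[R]) : Fin 3 → R := ![x.imI, x.imJ, x.imK]

theorem imVec_eq_zero_iff {x : ℍ[R]} : imVec x = 0 ↔ x.im = 0 := by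
  simp [imVec, Quaternion.ext_iff, cons_eq_zero_iff]

theorem commute_iff_cross_imVec_eq_zero [CharZero R] {x y : ℍ[R]} :
    Commute x y ↔ imVec x ⨯₃ imVec y = 0 := by
  simp only [commute_iff_eq, Quaternion.ext_iff, re_mul, imI_mul, imJ_mul, imK_mul, cross_apply,
    imVec, cons_val, cons_eq_zero_iff, zero_empty, and_true, sub_eq_zero]
  have cancel_two {a b : R} (h : 2 * a = 2 * b) : a = b := mul_left_cancel₀ two_ne_zero h
  constructor
  · rintro ⟨-, hI, hJ, hK⟩
    exact ⟨cancel_two (by linear_combination hI), cancel_two (by linear_combination hJ),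
      cancel_two (by linear_combination hK)⟩
  · rintro ⟨hI, hJ, hK⟩
    exact ⟨by ring, by linear_combination 2 * hI, by linear_combination 2 * hJ,
      by linear_combination 2 * hK⟩

theorem im_eq_zero_of_commute_of_not_commute [CharZero R] {x y z : ℍ[R]} (hx : Commute z x)
    (hy : Commute z y) (hxy : ¬Commute x y) : z.im = 0 := by
  rw [← imVec_eq_zero_iff]
  by_contra hz
  rw [commute_iff_cross_imVec_eq_zero] at hx hy hxy
  exact hxy (cross_eq_zero_of_cross_eq_zero_of_ne_zero hz hx hy)

theorem eq_one_or_eq_neg_one_of_im_eq_zero {z : ℍ[ℝ]} (hz : z.im = 0) (hnorm : ‖z‖ = 1) :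
    z = 1 ∨ z = -1 := by
  rw [← re_add_im z, hz, add_zero] at hnorm ⊢
  rw [norm_coe, Real.norm_eq_abs] at hnorm
  rcases abs_eq_abs.mp (hnorm.trans abs_one.symm) with h | h <;> simp [h]

end Quaternion

theorem mul_add_one_eq_zero_mul_one {G : Type*} [GroupWithZero G] {n : ℕ} [NeZero n]
    {q : ZMod n → G} (hq : ∀ i, q i ≠ 0) (hrel : ∀ i, q (i + 1) = (q i)⁻¹ * q (i - 1) * q i)
    (i : ZMod n) : q i * q (i + 1) = q 0 * q 1 := by
  obtain ⟨m, rfl⟩ := ZMod.natCast_zmod_surjective i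
  induction m with
  | zero => simp
  | succ m ih =>
    rw [Nat.cast_succ, hrel (m + 1), add_sub_cancel_right, ← mul_assoc, ← mul_assoc,
      mul_inv_cancel₀ (hq _), one_mul, ih]

section ConstantConsecutiveProducts

variable {M : Type*} [Monoid M] {n : ℕ} {q : ZMod n → M}

theorem semiconjBy_zero_mul_one (hprod : ∀ i, q i * q (i + 1) = q 0 * q 1) (i : ZMod n) :
    SemiconjBy (q 0 * q 1) (q (i + 2)) (q i) := by
  have hnext : q (i + 1) * q (i + 2) = q 0 * q 1 := by
    simpa only [add_assoc, one_add_one_eq_two] using hprod (i + 1)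
  calc q 0 * q 1 * q (i + 2) = q i * q (i + 1) * q (i + 2) := by rw [hprod]
    _ = q i * (q 0 * q 1) := by rw [mul_assoc, hnext]

theorem semiconjBy_zero_mul_one_pow (hprod : ∀ i, q i * q (i + 1) = q 0 * q 1) (i : ZMod n)
    (m : ℕ) : SemiconjBy ((q 0 * q 1) ^ m) (q (i + 2 * m)) (q i) := by
  induction m with
  | zero => simp [SemiconjBy]
  | succ m ih =>
    have := ih.mul_left (semiconjBy_zero_mul_one hprod (i + 2 * m))
    rwa [← pow_succ, add_assoc, ← mul_add_one, ← Nat.cast_succ] at this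

theorem commute_zero_mul_one_pow_card (hprod : ∀ i, q i * q (i + 1) = q 0 * q 1)
    (i : ZMod n) : Commute ((q 0 * q 1) ^ n) (q i) := by
  simpa [Commute] using semiconjBy_zero_mul_one_pow hprod i n

end ConstantConsecutiveProducts

/-- Let `n = 2k+1` be odd and `q_0,…,q_{n-1}` unit quaternions (indices mod `n`) with
`q_{i+1} = q_i⁻¹ q_{i-1} q_i` for all `i`, not all commuting pairwise.
Then `(q_0 q_1)^n ∈ {1, -1}`. -/
theorem stmt_13 (k : ℕ) (q : ZMod (2 * k + 1) → ℍ[ℝ])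
    (hnorm : ∀ i, ‖q i‖ = 1)
    (hrel : ∀ i : ZMod (2 * k + 1), q (i + 1) = (q i)⁻¹ * q (i - 1) * q i)
    (hnc : ∃ i j : ZMod (2 * k + 1), q i * q j ≠ q j * q i) :
    (q 0 * q 1) ^ (2 * k + 1) = 1 ∨ (q 0 * q 1) ^ (2 * k + 1) = -1 := by
  have hq : ∀ i, q i ≠ 0 := fun i => norm_ne_zero_iff.mp (by simp [hnorm])
  have hprod := mul_add_one_eq_zero_mul_one hq hrel
  obtain ⟨i, j, hij⟩ := hnc
  have hreal : ((q 0 * q 1) ^ (2 * k + 1)).im = 0 :=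
    im_eq_zero_of_commute_of_not_commute (commute_zero_mul_one_pow_card hprod i)
      (commute_zero_mul_one_pow_card hprod j) hij
  exact eq_one_or_eq_neg_one_of_im_eq_zero hreal (by simp [hnorm])
end
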